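/- For every finite tree-like n-model T there is a unique node T_w of the n-universal model T(n) with T ≡ T_w (there are monotonic maps both from T into T_w and from T_w into T); consequently T and T_w satisfy the same MR-formulas at their roots. -/

import Mathlib

/-! ## Formulas of intuitionistic propositional logic -/

inductive Formula : Type
  | bot : Formula
  | var : ℕ → Formula
  | and : Formula → Formula → Formula
  | or  : Formula → Formula → Formula
  | imp : Formula → Formula → Formula
  deriving DecidableEq

namespace Formula

def top : Formula := imp bot bot

def iff_ (φ ψ : Formula) : Formula := and (imp φ ψ) (imp ψ φ)

/-- `φ` contains no implication at all. -/
def noImp : Formula → Prop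
  | bot => True
  | var _ => True
  | and φ ψ => noImp φ ∧ noImp ψ
  | or φ ψ => noImp φ ∧ noImp ψ
  | imp _ _ => False

/-- NNIL-formulas: no nesting of implications to the left. -/
def IsNNIL : Formula → Prop
  | bot => True
  | var _ => True
  | and φ ψ => IsNNIL φ ∧ IsNNIL ψ
  | or φ ψ => IsNNIL φ ∧ IsNNIL ψ
  | imp φ ψ => noImp φ ∧ IsNNIL ψ

/-- `φ` is an `n`-formula: all its propositional variables are among `p_0, …, p_{n-1}`. -/
def varsBelow (n : ℕ) : Formula → Prop
  | bot => True
  | var p => p < n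
  | and φ ψ => varsBelow n φ ∧ varsBelow n ψ
  | or φ ψ => varsBelow n φ ∧ varsBelow n ψ
  | imp φ ψ => varsBelow n φ ∧ varsBelow n ψ

/-- the propositional variable `p` occurs in the formula -/
def occurs (p : ℕ) : Formula → Prop
  | bot => False
  | var q => q = p
  | and φ ψ => occurs p φ ∨ occurs p ψ
  | or φ ψ => occurs p φ ∨ occurs p ψ
  | imp φ ψ => occurs p φ ∨ occurs p ψ

/-- uniform substitution -/
def subst (σ : ℕ → Formula) : Formula → Formula
  | bot => bot
  | var p => σ p
  | and φ ψ => and (subst σ φ) (subst σ ψ)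
  | or φ ψ => or (subst σ φ) (subst σ ψ)
  | imp φ ψ => imp (subst σ φ) (subst σ ψ)

end Formula

/-- finite conjunction (empty conjunction is ⊤) -/
def listAnd : List Formula → Formula
  | [] => Formula.top
  | φ :: l => Formula.and φ (listAnd l)

/-- finite disjunction (empty disjunction is ⊥) -/
def listOr : List Formula → Formula
  | [] => Formula.bot
  | φ :: l => Formula.or φ (listOr l)

/-! ## Kripke structures, models and satisfaction -/

/-- raw Kripke structure: worlds, relation, Boolean valuation -/
structure KStruct where
  W : Type
  R : W → W → Prop
  V : W → ℕ → Bool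

namespace KStruct

/-- a Kripke model: `R` is a partial order and `V` is persistent -/
def IsModel (M : KStruct) : Prop :=
  (∀ w, M.R w w) ∧
  (∀ w u v, M.R w u → M.R u v → M.R w v) ∧
  (∀ w u, M.R w u → M.R u w → w = u) ∧
  (∀ w u p, M.R w u → M.V w p = true → M.V u p = true)

/-- an `n`-model: a Kripke model whose valuation is restricted to the variables `p_0,…,p_{n-1}` -/
def IsNModel (M : KStruct) (n : ℕ) : Prop :=
  M.IsModel ∧ ∀ w p, n ≤ p → M.V w p = false

/-- intuitionistic satisfaction -/
def sat (M : KStruct) : M.W → Formula → Prop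
  | _, Formula.bot => False
  | w, Formula.var p => M.V w p = true
  | w, Formula.and φ ψ => M.sat w φ ∧ M.sat w ψ
  | w, Formula.or φ ψ => M.sat w φ ∨ M.sat w ψ
  | w, Formula.imp φ ψ => ∀ u, M.R w u → M.sat u φ → M.sat u ψ

/-- the submodel on a subset of the worlds -/
def restrict (M : KStruct) (S : Set M.W) : KStruct where
  W := S
  R := fun a b => M.R a.1 b.1
  V := fun a p => M.V a.1 p

end KStruct

/-- monotonic map between Kripke structures: preserves the order and the colors -/
def Monotonic (M N : KStruct) (f : M.W → N.W) : Prop :=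
  (∀ w u, M.R w u → N.R (f w) (f u)) ∧ (∀ w p, N.V (f w) p = M.V w p)

/-- p-morphism: a monotonic map satisfying the forth condition -/
def PMorphism (M N : KStruct) (f : M.W → N.W) : Prop :=
  Monotonic M N f ∧ ∀ w u', N.R (f w) u' → ∃ u, M.R w u ∧ f u = u'

/-- MR: the class of formulas reflected by monotonic maps between Kripke models -/
def MR (φ : Formula) : Prop :=
  ∀ (N M : KStruct), N.IsModel → M.IsModel →
    ∀ f : N.W → M.W, Monotonic N M f → ∀ w : N.W, M.sat (f w) φ → N.sat w φ

/-- `r` is a root of `M` -/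
def IsRoot (M : KStruct) (r : M.W) : Prop := ∀ w, M.R r w

/-- `M` is tree-like with root `r`: rooted, and each point has a finite,
linearly ordered set of predecessors -/
def IsTree (M : KStruct) (r : M.W) : Prop :=
  IsRoot M r ∧ (∀ w : M.W, {u | M.R u w}.Finite) ∧
  (∀ w u v : M.W, M.R u w → M.R v w → (M.R u v ∨ M.R v u))

/-- `u` is an immediate (proper) successor of `w` -/
def ImmSucc (M : KStruct) (w u : M.W) : Prop :=
  M.R w u ∧ w ≠ u ∧ ∀ v, M.R w v → M.R v u → v = w ∨ v = u

/-- `S` carries a color-preserving submodel of `M` -/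
def ColorPresSub (M : KStruct) (S : Set M.W) : Prop :=
  ∀ w ∈ S, ∀ u, M.R w u → ∃ v ∈ S, M.R w v ∧ ∀ p, M.V v p = M.V u p

/-! ## The β-formulas of finite models -/

/-- the variables among `p_0,…,p_{n-1}` true at `w` -/
def propList (M : KStruct) (n : ℕ) (w : M.W) : List Formula :=
  ((List.range n).filter (fun p => M.V w p)).map Formula.var

/-- the variables among `p_0,…,p_{n-1}` false at `w` -/
def notpropList (M : KStruct) (n : ℕ) (w : M.W) : List Formula :=
  ((List.range n).filter (fun p => !(M.V w p))).map Formula.var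

open Classical in
/-- the immediate successors of `w`, as a list -/
noncomputable def immSuccList (M : KStruct) [Fintype M.W] (w : M.W) : List M.W :=
  (Finset.univ.filter (fun u => ImmSucc M w u)).toList

/-- β(w), defined by recursion on the depth of `w` (computed with enough fuel):
`β(w) = ⋀prop(w) → (⋁notprop(w) ∨ β(w_1) ∨ … ∨ β(w_k))` where the `w_i` are the
immediate successors of `w` (for maximal `w` the last disjunct is the empty disjunction). -/
noncomputable def betaFuel (M : KStruct) [Fintype M.W] (n : ℕ) : ℕ → M.W → Formula
  | 0, _ => Formula.bot
  | (k+1), w =>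
      Formula.imp (listAnd (propList M n w))
        (listOr (notpropList M n w ++ (immSuccList M w).map (fun u => betaFuel M n k u)))

/-- β(w) for a point `w` of a finite `n`-model: `Fintype.card M.W` is an upper bound
for the depth of any point, so the recursion above never runs out of fuel. -/
noncomputable def beta (M : KStruct) [inst : Fintype M.W] (n : ℕ) (w : M.W) : Formula :=
  betaFuel M n (Fintype.card M.W) w

/-! ## Unravelings -/

/-- the unraveling `T_N` of a rooted model `(N, r)`: points are the finite sequences
`⟨r, w_1, …, w_k⟩` in which each entry is an immediate successor of the preceding one,
ordered by the initial-segment relation; such a sequence satisfies the same variables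
as its last entry. -/
def Unravel (M : KStruct) (r : M.W) : KStruct where
  W := {l : List M.W // l.head? = some r ∧ List.Chain' (ImmSucc M) l}
  R := fun σ τ => σ.1 <+: τ.1
  V := fun σ p => (σ.1.getLast?.map (fun w => M.V w p)).getD false

/-! ## Kripke frames -/

structure KFrame where
  W : Type
  R : W → W → Prop

namespace KFrame

/-- a Kripke frame: `R` is a partial order -/
def IsFrame (F : KFrame) : Prop :=
  (∀ w, F.R w w) ∧ (∀ w u v, F.R w u → F.R u v → F.R w v) ∧
  (∀ w u, F.R w u → F.R u w → w = u)

def Persistent (F : KFrame) (V : F.W → ℕ → Bool) : Prop :=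
  ∀ w u p, F.R w u → V w p = true → V u p = true

/-- the model on `F` given by a valuation -/
def model (F : KFrame) (V : F.W → ℕ → Bool) : KStruct := ⟨F.W, F.R, V⟩

/-- `F ⊨ φ` : `φ` is true at every point of every model on `F` -/
def valid (F : KFrame) (φ : Formula) : Prop :=
  ∀ V, F.Persistent V → ∀ w, (F.model V).sat w φ

/-- the substructure of `F` on a subset `S` of its domain, with the restricted order -/
def restrictF (F : KFrame) (S : Set F.W) : KFrame :=
  ⟨S, fun a b => F.R a.1 b.1⟩

end KFrame

/-- a monotonic map from a model `N` into a frame `F` which is color-consistent: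
`f(w) R f(u)` implies `col(w) ≤ col(u)` -/
def ColorConsistentMap (N : KStruct) (F : KFrame) (f : N.W → F.W) : Prop :=
  (∀ w u, N.R w u → F.R (f w) (f u)) ∧
  (∀ w u, F.R (f w) (f u) → ∀ p, N.V w p = true → N.V u p = true)


/-! ## The n-universal model 𝒯(n) for NNIL -/

/-- an `n`-color -/
abbrev Col (n : ℕ) := Fin n → Bool

/-- componentwise order on colors -/
def ColLE {n : ℕ} (c d : Col n) : Prop := ∀ i, c i = true → d i = true

def ColLT {n : ℕ} (c d : Col n) : Prop := ColLE c d ∧ c ≠ d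

/-- finite colored trees: a root color together with the list of subtrees
hanging above the root -/
inductive CTree (n : ℕ) : Type
  | node : Col n → List (CTree n) → CTree n

namespace CTree

variable {n : ℕ}

def color : CTree n → Col n
  | node c _ => c

def children : CTree n → List (CTree n)
  | node _ ts => ts

/-- the subtree of `t` at a position (a list of child indices) -/
def subt : List ℕ → CTree n → Option (CTree n)
  | [], t => some t
  | i :: l, t => (t.children[i]?).bind (subt l)

/-- the finite tree-like `n`-model determined by a colored tree: its worlds are
the positions of `t`, ordered by the initial-segment relation, and a position
satisfies `p_i` iff the color of the subtree there is `1` at `i`. -/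
def toModel (t : CTree n) : KStruct where
  W := {l : List ℕ // (subt l t).isSome = true}
  R := fun a b => a.1 <+: b.1
  V := fun a p =>
    if h : p < n then ((subt a.1 t).map (fun s => s.color ⟨p, h⟩)).getD false
    else false

/-- the root of the model of a tree -/
def root (t : CTree n) : t.toModel.W := ⟨[], rfl⟩

/-- an injective code of colors -/
def colCode (c : Col n) : ℕ := ∑ i : Fin n, (if c i then 2 ^ (i : ℕ) else 0)

/-- an injective code of lists of numbers -/
def listCode : List ℕ → ℕ
  | [] => 0
  | a :: l => Nat.pair a (listCode l) + 1

/-- an injective code of colored trees, used to order the children of every node of a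
tree in the universal model canonically -/
def code : CTree n → ℕ
  | node c ts => Nat.pair (colCode c) (listCode (ts.attach.map (fun x => code x.1)))
decreasing_by
  have := List.sizeOf_lt_of_mem x.2
  simp only [CTree.node.sizeOf_spec]
  omega

end CTree

/-- `MLE s t` (`s ≤ t`): there is a monotonic map from (the model of) `t` into `s` -/
def MLE {n : ℕ} (s t : CTree n) : Prop :=
  ∃ f : t.toModel.W → s.toModel.W, Monotonic t.toModel s.toModel f

/-- membership in the domain of the universal model `𝒯(n)`, built in layers:
layer 1 consists of the one-point trees (one for each color); a tree of a later layer
is built from a set `X` of pairwise `≤`-incomparable trees of earlier layers (encoded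
as a list sorted canonically by `code`) by adding a fresh root below whose color is
strictly smaller than every color occurring in the trees of `X`. -/
inductive UMem : {n : ℕ} → CTree n → Prop
  | single {n : ℕ} (c : Col n) : UMem (CTree.node c [])
  | step {n : ℕ} (c : Col n) (ts : List (CTree n)) :
      ts ≠ [] →
      (∀ t ∈ ts, UMem t) →
      List.Chain' (fun a b => CTree.code a < CTree.code b) ts →
      (∀ t ∈ ts, ∀ s ∈ ts, t ≠ s → ¬ MLE t s) →
      (∀ t ∈ ts, ∀ (l : List ℕ) (s : CTree n), CTree.subt l t = some s →
        ColLT c s.color) →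
      UMem (CTree.node c ts)

/-- the universal model `𝒯(n)`: its points are the trees in `UMem`, ordered by `≤`
(where `T_w ≤ T_u` iff there is a monotonic map from `T_u` into `T_w`), and the color
of a node is the color of the root of the corresponding tree. -/
def UnivModel (n : ℕ) : KStruct where
  W := {t : CTree n // UMem t}
  R := fun a b => MLE a.1 b.1
  V := fun a p => if h : p < n then a.1.color ⟨p, h⟩ else false

/-- mutual monotonic mappability (`≡`) of Kripke structures -/
def MEquiv (A B : KStruct) : Prop :=
  (∃ f : B.W → A.W, Monotonic B A f) ∧ (∃ g : A.W → B.W, Monotonic A B g)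


/-!
A finite tree-like model is unravelled into a finite colored tree; because every point has a
unique chain of predecessors, the model and its unravelling map monotonically into each other,
root to root. The tree is then normalized bottom-up: at each node, children of the node's own
color are dissolved into their children, and of the resulting subtrees only the `≤`-minimal ones
are kept. The result is a node of `𝒯(n)` with root-preserving monotonic maps to and from the
tree, and MR-formulas are transported along such maps in both directions.

Uniqueness is antisymmetry of `≤` on `𝒯(n)`. Above the root of a node of `𝒯(n)` all colors are
strictly larger, so a monotonic map between two nodes of the same root color sends each child into
(a subtree of) a child. If the nodes map into each other, the children of either node, being an
antichain, are thereby matched with mutually mappable children of the other, which are equal by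
induction; the children lists, sorted by `code`, coincide.
-/

lemma Monotonic.comp {A B C : KStruct} {f : A.W → B.W} {g : B.W → C.W}
    (hf : Monotonic A B f) (hg : Monotonic B C g) : Monotonic A C (g ∘ f) :=
  ⟨fun w u h => hg.1 _ _ (hf.1 w u h), fun w p => (hg.2 (f w) p).trans (hf.2 w p)⟩

def PointedMono (A : KStruct) (a : A.W) (B : KStruct) (b : B.W) : Prop :=
  ∃ f : A.W → B.W, Monotonic A B f ∧ f a = b

lemma PointedMono.trans {A B C : KStruct} {a : A.W} {b : B.W} {c : C.W}
    (h₁ : PointedMono A a B b) (h₂ : PointedMono B b C c) : PointedMono A a C c :=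
  let ⟨f, hf, hfa⟩ := h₁
  let ⟨g, hg, hgb⟩ := h₂
  ⟨g ∘ f, hf.comp hg, by simp [hfa, hgb]⟩

lemma MR.sat_iff_of_pointedMono {φ : Formula} (hφ : MR φ) {A B : KStruct} {a : A.W} {b : B.W}
    (hA : A.IsModel) (hB : B.IsModel) (hab : PointedMono A a B b) (hba : PointedMono B b A a) :
    A.sat a φ ↔ B.sat b φ := by
  obtain ⟨f, hf, rfl⟩ := hab
  obtain ⟨g, hg, hga⟩ := hba
  refine ⟨fun h => hφ B A hB hA g hg _ ?_, hφ A B hA hB f hf a⟩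
  rwa [hga]

lemma colLT_iff_lt {n : ℕ} {c d : Col n} : ColLT c d ↔ c < d := by
  simp only [ColLT, ColLE, lt_iff_le_and_ne, Pi.le_def, Bool.le_iff_imp]

namespace CTree

variable {n : ℕ}

@[induction_eliminator]
theorem induction {motive : CTree n → Prop}
    (node : ∀ c ts, (∀ t ∈ ts, motive t) → motive (node c ts)) (t : CTree n) : motive t :=
  match t with
  | .node c ts => node c ts fun t _ => induction node t
decreasing_by
  have := List.sizeOf_lt_of_mem ‹t ∈ ts›
  simp only [CTree.node.sizeOf_spec]
  omega

@[simp] lemma children_node (c : Col n) (ts : List (CTree n)) : (node c ts).children = ts := rfl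

lemma node_color_children (t : CTree n) : node t.color t.children = t := by
  cases t; rfl

lemma colCode_eq_sum (c : Col n) :
    colCode c = ∑ i ∈ (Finset.univ.filter (c · = true)).map Fin.valEmbedding, 2 ^ i := by
  rw [colCode, Finset.sum_map, Finset.sum_filter]
  rfl

lemma colCode_injective : Function.Injective (colCode (n := n)) := by
  intro c d h
  rw [colCode_eq_sum, colCode_eq_sum] at h
  have := Finset.map_injective _ (Finset.geomSum_injective le_rfl h)
  funext i
  simpa using congrArg (i ∈ ·) this

lemma listCode_injective : Function.Injective listCode
  | [], [], _ => rfl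
  | a :: l, b :: m, h => by
    simp only [listCode, Nat.add_right_cancel_iff, Nat.pair_eq_pair] at h
    rw [h.1, listCode_injective h.2]

lemma code_node (c : Col n) (ts : List (CTree n)) :
    code (node c ts) = Nat.pair (colCode c) (listCode (ts.map code)) := by
  rw [code, List.attach_map_val]

lemma code_injective : Function.Injective (code (n := n)) := by
  intro s
  induction s with
  | node c ts ih =>
    rintro ⟨d, us⟩ h
    rw [code_node, code_node, Nat.pair_eq_pair] at h
    obtain ⟨hcd, hts⟩ := h
    replace hts := listCode_injective hts
    have hlen : ts.length = us.length := by simpa using congrArg List.length hts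
    refine congrArg₂ node (colCode_injective hcd)
      (List.ext_getElem hlen fun i h₁ h₂ => ih _ (List.getElem_mem h₁) ?_)
    simpa [h₁, h₂] using congrArg (·[i]?) hts

lemma subt_node_cons (c : Col n) (ts : List (CTree n)) (i : ℕ) (l : List ℕ) :
    subt (i :: l) (node c ts) = ts[i]?.bind (subt l) := rfl

lemma subt_node_cons_of_lt {c : Col n} {ts : List (CTree n)} {i : ℕ} (hi : i < ts.length)
    (l : List ℕ) : subt (i :: l) (node c ts) = subt l ts[i] := by
  simp [subt_node_cons, hi]

lemma lt_length_of_isSome_subt {c : Col n} {ts : List (CTree n)} {i : ℕ} {l : List ℕ}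
    (h : (subt (i :: l) (node c ts)).isSome) : i < ts.length := by
  by_contra hi
  simp [subt_node_cons, List.getElem?_eq_none (not_lt.1 hi)] at h

lemma subt_append (l m : List ℕ) (t : CTree n) :
    subt (l ++ m) t = (subt l t).bind (subt m) := by
  induction l generalizing t with
  | nil => rfl
  | cons i l ih => simp [subt, ih, Option.bind_assoc]

lemma toModel_V_congr {s t : CTree n} {v : s.toModel.W} {w : t.toModel.W}
    (h : subt v.1 s = subt w.1 t) (p : ℕ) : s.toModel.V v p = t.toModel.V w p := by
  simp only [toModel, h]

lemma toModel_V_of_subt {t s : CTree n} {w : t.toModel.W} (h : subt w.1 t = some s) (p : ℕ) :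
    t.toModel.V w p = if hp : p < n then s.color ⟨p, hp⟩ else false := by
  simp [toModel, h]

lemma _root_.Monotonic.subt_color_eq {s t a b : CTree n} {f : s.toModel.W → t.toModel.W}
    (hf : Monotonic s.toModel t.toModel f) {w : s.toModel.W}
    (ha : subt w.1 s = some a) (hb : subt (f w).1 t = some b) : a.color = b.color := by
  funext i
  have := hf.2 w i
  rwa [toModel_V_of_subt hb, toModel_V_of_subt ha, dif_pos i.2, dif_pos i.2, eq_comm] at this

def Persistent (t : CTree n) : Prop :=
  ∀ l m a b, subt l t = some a → subt m a = some b → a.color ≤ b.color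

lemma Persistent.toModel_isModel {t : CTree n} (ht : t.Persistent) : t.toModel.IsModel := by
  refine ⟨fun _ => List.prefix_refl _, fun _ _ _ => List.IsPrefix.trans, ?_, ?_⟩
  · exact fun v w h h' => Subtype.ext (h.eq_of_length (h.length_le.antisymm h'.length_le))
  · rintro v w p ⟨m, hm⟩ hv
    obtain ⟨a, ha⟩ := Option.isSome_iff_exists.1 v.2
    obtain ⟨b, hb⟩ := Option.isSome_iff_exists.1 w.2
    rw [toModel_V_of_subt ha] at hv
    rw [toModel_V_of_subt hb]
    rw [← hm, subt_append, ha] at hb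
    split_ifs at hv ⊢ with hp
    exact Bool.le_iff_imp.1 (ht _ _ _ _ ha hb ⟨p, hp⟩) hv

lemma Persistent.of_mem {c : Col n} {ts : List (CTree n)} (h : Persistent (node c ts))
    {u : CTree n} (hu : u ∈ ts) : u.Persistent := by
  obtain ⟨i, hi, rfl⟩ := List.getElem_of_mem hu
  exact fun l m a b ha => h (i :: l) m a b (by rwa [subt_node_cons_of_lt hi])

lemma Persistent.color_le_of_mem {c : Col n} {ts : List (CTree n)} (h : Persistent (node c ts))
    {u : CTree n} (hu : u ∈ ts) : c ≤ u.color := by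
  obtain ⟨i, hi, rfl⟩ := List.getElem_of_mem hu
  exact h [] [i] _ _ rfl (by simp [subt])

/-- As in the paper, `s ≤ t` (`MLE s t`) means that `t` maps monotonically into `s`. -/
instance : Preorder (CTree n) where
  le := MLE
  le_refl _ := ⟨id, fun _ _ h => h, fun _ _ => rfl⟩
  le_trans _ _ _ := fun ⟨f, hf⟩ ⟨g, hg⟩ => ⟨f ∘ g, hg.comp hf⟩

lemma le_of_subt {t a : CTree n} {l : List ℕ} (h : subt l t = some a) : t ≤ a := by
  have hsub (m) : subt (l ++ m) t = subt m a := by rw [subt_append, h]; rfl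
  exact ⟨fun m => ⟨l ++ m.1, by rw [hsub]; exact m.2⟩,
    fun _ _ hm => (List.prefix_append_right_inj l).2 hm,
    fun m => toModel_V_congr (hsub m.1)⟩

lemma le_of_mem {c : Col n} {ts : List (CTree n)} {t : CTree n} (ht : t ∈ ts) :
    node c ts ≤ t := by
  obtain ⟨i, hi, rfl⟩ := List.getElem_of_mem ht
  exact le_of_subt (l := [i]) (by simp [subt])

lemma le_of_monotonic_subt {s t a b : CTree n} {f : s.toModel.W → t.toModel.W}
    (hf : Monotonic s.toModel t.toModel f) {w : s.toModel.W}
    (ha : subt w.1 s = some a) (hb : subt (f w).1 t = some b) : b ≤ a := by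
  have hpos (m : a.toModel.W) : (subt (w.1 ++ m.1) s).isSome := by
    rw [subt_append, ha]; exact m.2
  let g : a.toModel.W → s.toModel.W := fun m => ⟨w.1 ++ m.1, hpos m⟩
  -- `f` sends positions above `w` to positions above `f w`; `d` strips the prefix `f w`.
  let d : a.toModel.W → List ℕ := fun m => (f (g m)).1.drop (f w).1.length
  have hd (m) : (f w).1 ++ d m = (f (g m)).1 :=
    List.prefix_iff_eq_append.1 (hf.1 _ _ (List.prefix_append _ _))
  have hsub (m) : subt (d m) b = subt (f (g m)).1 t := by rw [← hd, subt_append, hb]; rfl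
  refine ⟨fun m => ⟨d m, by rw [hsub]; exact (f (g m)).2⟩, fun m m' hm => ?_, fun m p => ?_⟩
  · have : (f (g m)).1 <+: (f (g m')).1 := hf.1 _ _ ((List.prefix_append_right_inj _).2 hm)
    rwa [← hd, ← hd, List.prefix_append_right_inj] at this
  · refine ((toModel_V_congr (w := f (g m)) (hsub m) p).trans (hf.2 (g m) p)).trans ?_
    exact toModel_V_congr (by rw [subt_append, ha]; rfl) p

abbrev RootMap (s t : CTree n) : Prop := PointedMono s.toModel s.root t.toModel t.root

lemma RootMap.le {s t : CTree n} (h : RootMap s t) : t ≤ s :=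
  let ⟨f, hf, _⟩ := h
  ⟨f, hf⟩

noncomputable def glue {c : Col n} {us : List (CTree n)} {t : CTree n}
    (F : ∀ u ∈ us, u.toModel.W → t.toModel.W) : (node c us).toModel.W → t.toModel.W
  | ⟨[], _⟩ => t.root
  | ⟨_ :: l, h⟩ => F _ (List.getElem_mem (lt_length_of_isSome_subt h))
      ⟨l, by rwa [subt_node_cons_of_lt (lt_length_of_isSome_subt h)] at h⟩

lemma rootMap_node {c : Col n} {us : List (CTree n)} {t : CTree n} (hc : t.color = c)
    (h : ∀ u ∈ us, t ≤ u) : RootMap (node c us) t := by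
  choose F hF using h
  refine ⟨glue F, ⟨?_, ?_⟩, rfl⟩
  · rintro ⟨_ | ⟨i, l⟩, hl⟩ ⟨_ | ⟨j, m⟩, hm⟩ hlm
    · exact List.prefix_refl _
    · exact List.nil_prefix
    · exact absurd hlm (by simp [toModel])
    · obtain ⟨rfl, hlm'⟩ := List.cons_prefix_cons.1 hlm
      exact (hF _ _).1 _ _ hlm'
  · rintro ⟨_ | ⟨i, l⟩, hl⟩ p
    · change t.toModel.V t.root p = _
      rw [toModel_V_of_subt (w := t.root) rfl, hc]
      rfl
    · exact ((hF _ _).2 _ p).trans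
        (toModel_V_congr (subt_node_cons_of_lt (lt_length_of_isSome_subt hl) l).symm p)

end CTree

namespace UMem

open CTree

variable {n : ℕ} {c : Col n} {ts : List (CTree n)}

lemma of_mem (h : UMem (node c ts)) : ∀ t ∈ ts, UMem t := by
  cases h with
  | single => simp
  | step _ _ _ h => exact h

lemma isChain (h : UMem (node c ts)) : ts.IsChain (fun a b => code a < code b) := by
  cases h with
  | single => exact List.isChain_nil
  | step _ _ _ _ h => exact h

lemma antichain (h : UMem (node c ts)) : ∀ t ∈ ts, ∀ s ∈ ts, t ≠ s → ¬ t ≤ s := by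
  cases h with
  | single => simp
  | step _ _ _ _ _ h => exact h

lemma color_lt (h : UMem (node c ts)) :
    ∀ t ∈ ts, ∀ (l : List ℕ) (s : CTree n), subt l t = some s → c < s.color := by
  cases h with
  | single => simp
  | step _ _ _ _ _ _ h => exact fun t ht l s hs => colLT_iff_lt.1 (h t ht l s hs)

lemma of_subt {t a : CTree n} (ht : UMem t) {l : List ℕ} (h : subt l t = some a) : UMem a := by
  induction l generalizing t with
  | nil => cases h; exact ht
  | cons i l ih =>
    obtain ⟨c, ts⟩ := t
    have hi := lt_length_of_isSome_subt (h ▸ rfl : (subt (i :: l) (node c ts)).isSome)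
    rw [subt_node_cons_of_lt hi] at h
    exact ih (ht.of_mem _ (List.getElem_mem hi)) h

lemma color_le_of_subt {t a : CTree n} (ht : UMem t) {l : List ℕ} (h : subt l t = some a) :
    t.color ≤ a.color := by
  obtain ⟨c, ts⟩ := t
  cases l with
  | nil => cases h; exact le_rfl
  | cons i l =>
    have hi := lt_length_of_isSome_subt (h ▸ rfl : (subt (i :: l) (node c ts)).isSome)
    rw [subt_node_cons_of_lt hi] at h
    exact (ht.color_lt _ (List.getElem_mem hi) l a h).le

lemma persistent {t : CTree n} (ht : UMem t) : t.Persistent :=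
  fun _ _ _ _ ha hb => (ht.of_subt ha).color_le_of_subt hb

lemma color_le_of_le {s t : CTree n} (hs : UMem s) (h : s ≤ t) : s.color ≤ t.color := by
  obtain ⟨f, hf⟩ := h
  obtain ⟨a, ha⟩ := Option.isSome_iff_exists.1 (f t.root).2
  rw [hf.subt_color_eq (w := t.root) rfl ha]
  exact hs.color_le_of_subt ha

end UMem

namespace CTree

variable {n : ℕ}

lemma exists_le_of_node_le {c : Col n} {ts us : List (CTree n)} (hts : ∀ u ∈ ts, u.color ≠ c)
    (h : node c us ≤ node c ts) : ∀ u ∈ ts, ∃ v ∈ us, v ≤ u := by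
  obtain ⟨f, hf⟩ := h
  intro u hu
  obtain ⟨i, hi, rfl⟩ := List.getElem_of_mem hu
  have hw : subt [i] (node c ts) = some ts[i] := by simp [subt]
  let w : (node c ts).toModel.W := ⟨[i], by rw [hw]; rfl⟩
  obtain ⟨b, hb⟩ := Option.isSome_iff_exists.1 (f w).2
  have hcol : ts[i].color = b.color := hf.subt_color_eq hw hb
  obtain ⟨j, m, hfw⟩ : ∃ j m, (f w).1 = j :: m := by
    rcases hfw : (f w).1 with _ | ⟨j, m⟩
    · rw [hfw] at hb
      cases hb
      exact absurd hcol (hts _ hu)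
    · exact ⟨j, m, rfl⟩
  have hj : j < us.length := lt_length_of_isSome_subt (hfw ▸ (f w).2)
  have hm : subt m us[j] = some b := by rw [← subt_node_cons_of_lt hj, ← hfw, hb]
  exact ⟨us[j], List.getElem_mem hj, (le_of_subt hm).trans (le_of_monotonic_subt hf hw hb)⟩

lemma mem_of_antichain {A B : List (CTree n)} (hA : ∀ t ∈ A, ∀ s ∈ A, t ≠ s → ¬ t ≤ s)
    (hAB : ∀ a ∈ A, ∃ b ∈ B, b ≤ a) (hBA : ∀ b ∈ B, ∃ a ∈ A, a ≤ b)
    (heq : ∀ a ∈ A, ∀ b ∈ B, a ≤ b → b ≤ a → a = b) : ∀ a ∈ A, a ∈ B := by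
  intro a ha
  obtain ⟨b, hb, hba⟩ := hAB a ha
  obtain ⟨a', ha', hab⟩ := hBA b hb
  obtain rfl : a = a' := by_contra fun hne => hA a' ha' a ha (Ne.symm hne) (hab.trans hba)
  rwa [heq a ha b hb hab hba]

lemma eq_of_isChain_code {ts us : List (CTree n)} (hts : ts.IsChain (fun a b => code a < code b))
    (hus : us.IsChain (fun a b => code a < code b)) (h : ∀ t, t ∈ ts ↔ t ∈ us) : ts = us := by
  refine List.map_injective_iff.2 code_injective (List.Pairwise.eq_of_mem_iff (r := (· < ·))
    ?_ ?_ fun k => by simp [h])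
  · exact List.pairwise_map.2 (List.isChain_iff_pairwise.1 hts)
  · exact List.pairwise_map.2 (List.isChain_iff_pairwise.1 hus)

end CTree

open CTree in
theorem UMem.antisymm {n : ℕ} {s t : CTree n} (hs : UMem s) (ht : UMem t) (hst : s ≤ t)
    (hts : t ≤ s) : s = t := by
  induction s generalizing t with
  | node c ts ih =>
    obtain ⟨d, us⟩ := t
    obtain rfl : c = d := le_antisymm (hs.color_le_of_le hst) (ht.color_le_of_le hts)
    have hne {c : Col n} {ts} (h : UMem (node c ts)) : ∀ u ∈ ts, u.color ≠ c :=
      fun u hu => (h.color_lt u hu [] u rfl).ne'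
    have h₁ := exists_le_of_node_le (hne hs) hts
    have h₂ := exists_le_of_node_le (hne ht) hst
    have heq : ∀ u ∈ ts, ∀ v ∈ us, u ≤ v → v ≤ u → u = v :=
      fun u hu v hv => ih u hu (hs.of_mem u hu) (ht.of_mem v hv)
    congr 1
    refine eq_of_isChain_code hs.isChain ht.isChain fun u =>
      ⟨mem_of_antichain hs.antichain h₁ h₂ heq u, mem_of_antichain ht.antichain h₂ h₁ ?_ u⟩
    exact fun v hv u hu hvu huv => (heq u hu v hv huv hvu).symm

namespace CTree

variable {n : ℕ}

open Classical in
noncomputable def minimals (L : List (CTree n)) : List (CTree n) :=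
  (L.toFinset.filter (Minimal (· ∈ L))).toList.mergeSort (fun a b => code a ≤ code b)

lemma mem_minimals {L : List (CTree n)} {t : CTree n} :
    t ∈ minimals L ↔ Minimal (· ∈ L) t := by
  classical
  simp only [minimals, List.mem_mergeSort, Finset.mem_toList, Finset.mem_filter,
    List.mem_toFinset, and_iff_right_iff_imp]
  exact Minimal.prop

lemma isChain_minimals (L : List (CTree n)) :
    (minimals L).IsChain (fun a b => code a < code b) := by
  classical
  have hsorted := List.pairwise_mergeSort (le := fun a b : CTree n => decide (code a ≤ code b))
    (fun _ _ _ => by simpa using le_trans) (fun _ _ => by simpa using le_total _ _)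
    (L.toFinset.filter (Minimal (· ∈ L))).toList
  have hnodup : (minimals L).Nodup :=
    (List.mergeSort_perm _ _).nodup_iff.2 (Finset.nodup_toList _)
  refine List.Pairwise.isChain ((hsorted.and hnodup).imp ?_)
  rintro a b ⟨hab, hne⟩
  exact lt_of_le_of_ne (of_decide_eq_true hab) fun h => hne (code_injective h)

lemma exists_mem_minimals_le {L : List (CTree n)} {t : CTree n} (ht : t ∈ L) :
    ∃ m ∈ minimals L, m ≤ t := by
  classical
  obtain ⟨m, hmt, hm⟩ := L.toFinset.exists_le_minimal (List.mem_toFinset.2 ht)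
  exact ⟨m, mem_minimals.2 (by simpa using hm), hmt⟩

def splice (c : Col n) (L : List (CTree n)) : List (CTree n) :=
  L.flatMap fun s => if s.color = c then s.children else [s]

lemma mem_splice {c : Col n} {L : List (CTree n)} {x : CTree n} :
    x ∈ splice c L ↔ ∃ s ∈ L, (s.color = c ∧ x ∈ s.children) ∨ (s.color ≠ c ∧ x = s) := by
  simp only [splice, List.mem_flatMap]
  refine exists_congr fun s => and_congr_right fun _ => ?_
  split_ifs with h <;> simp [h]

/-- Dissolving the children of color `c` makes `c` strictly smaller than every color above the
root, as membership in `𝒯(n)` demands. -/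
noncomputable def merge (c : Col n) (L : List (CTree n)) : CTree n :=
  node c (minimals (splice c L))

lemma exists_le_of_mem_splice {c : Col n} {L : List (CTree n)} {x : CTree n}
    (hx : x ∈ splice c L) : ∃ s ∈ L, s ≤ x := by
  obtain ⟨s, hs, ⟨-, hxs⟩ | ⟨-, rfl⟩⟩ := mem_splice.1 hx
  · exact ⟨s, hs, node_color_children s ▸ le_of_mem hxs⟩
  · exact ⟨x, hs, le_rfl⟩

lemma merge_le_of_mem_splice {c : Col n} {L : List (CTree n)} {x : CTree n}
    (hx : x ∈ splice c L) : merge c L ≤ x :=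
  let ⟨_, hm, hmx⟩ := exists_mem_minimals_le hx
  (le_of_mem hm).trans hmx

lemma merge_le_of_mem {c : Col n} {L : List (CTree n)} {s : CTree n} (hs : s ∈ L) :
    merge c L ≤ s := by
  by_cases hc : s.color = c
  · rw [← node_color_children s, hc]
    refine (rootMap_node rfl fun u hu => merge_le_of_mem_splice ?_).le
    exact mem_splice.2 ⟨s, hs, .inl ⟨hc, hu⟩⟩
  · exact merge_le_of_mem_splice (mem_splice.2 ⟨s, hs, .inr ⟨hc, rfl⟩⟩)

lemma rootMap_node_merge (c : Col n) (L : List (CTree n)) : RootMap (node c L) (merge c L) :=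
  rootMap_node rfl fun _ => merge_le_of_mem

lemma rootMap_merge_node (c : Col n) (L : List (CTree n)) : RootMap (merge c L) (node c L) :=
  rootMap_node rfl fun _ hk =>
    let ⟨_, hs, hsk⟩ := exists_le_of_mem_splice (mem_minimals.1 hk).prop
    (le_of_mem hs).trans hsk

lemma umem_merge {c : Col n} {L : List (CTree n)} (hL : ∀ s ∈ L, UMem s ∧ c ≤ s.color) :
    UMem (merge c L) := by
  have hspl : ∀ x ∈ splice c L, UMem x ∧ ∀ l a, subt l x = some a → c < a.color := by
    intro x hx
    obtain ⟨s, hs, ⟨hc, hxs⟩ | ⟨hc, rfl⟩⟩ := mem_splice.1 hx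
    · have h := (hL s hs).1
      rw [← node_color_children s, hc] at h
      exact ⟨h.of_mem x hxs, h.color_lt x hxs⟩
    · obtain ⟨hx, hcx⟩ := hL x hs
      exact ⟨hx, fun l a ha =>
        (lt_of_le_of_ne hcx (Ne.symm hc)).trans_le (hx.color_le_of_subt ha)⟩
  by_cases hnil : minimals (splice c L) = []
  · rw [merge, hnil]
    exact UMem.single c
  refine UMem.step c _ hnil (fun t ht => (hspl t (mem_minimals.1 ht).prop).1)
    (isChain_minimals _) ?_ ?_
  · intro t ht s hs hne hts
    have ht' := mem_minimals.1 ht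
    have hs' := mem_minimals.1 hs
    exact hne ((hspl t ht'.prop).1.antisymm (hspl s hs'.prop).1 hts (hs'.2 ht'.prop hts))
  · exact fun t ht l a ha => colLT_iff_lt.2 ((hspl t (mem_minimals.1 ht).prop).2 l a ha)

noncomputable def normalize : CTree n → CTree n
  | node c ts => merge c (ts.attach.map fun t => normalize t.1)
decreasing_by
  have := List.sizeOf_lt_of_mem t.2
  simp only [CTree.node.sizeOf_spec]
  omega

lemma normalize_node (c : Col n) (ts : List (CTree n)) :
    normalize (node c ts) = merge c (ts.map normalize) := by
  rw [normalize, List.attach_map_val (f := normalize)]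

lemma color_normalize (t : CTree n) : (normalize t).color = t.color := by
  cases t
  rw [normalize_node]
  rfl

lemma Persistent.umem_normalize {t : CTree n} (ht : t.Persistent) : UMem (normalize t) := by
  induction t with
  | node c ts ih =>
    rw [normalize_node]
    refine umem_merge fun s hs => ?_
    obtain ⟨u, hu, rfl⟩ := List.mem_map.1 hs
    exact ⟨ih u hu (ht.of_mem hu), color_normalize u ▸ ht.color_le_of_mem hu⟩

lemma rootMap_normalize (t : CTree n) : RootMap t (normalize t) := by
  induction t with
  | node c ts ih =>
    rw [normalize_node]
    refine (rootMap_node rfl fun u hu => ?_).trans (rootMap_node_merge _ _)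
    exact (le_of_mem (List.mem_map_of_mem hu)).trans (ih u hu).le

lemma rootMap_normalize_self (t : CTree n) : RootMap (normalize t) t := by
  induction t with
  | node c ts ih =>
    rw [normalize_node]
    refine (rootMap_merge_node _ _).trans (rootMap_node rfl fun v hv => ?_)
    obtain ⟨u, hu, rfl⟩ := List.mem_map.1 hv
    exact (le_of_mem hu).trans (ih u hu).le

end CTree

lemma ncard_lt_of_rel {α : Type*} [Finite α] {R : α → α → Prop} (hrefl : ∀ a, R a a)
    (htrans : ∀ a b c, R a b → R b c → R a c) (hanti : ∀ a b, R a b → R b a → a = b) {a b : α}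
    (hab : R a b) (hne : a ≠ b) : {x | R b x}.ncard < {x | R a x}.ncard :=
  Set.ncard_lt_ncard ⟨fun _ hx => htrans _ _ _ hab hx,
    fun hsub => hne (hanti _ _ hab (hsub (hrefl a)))⟩ (Set.toFinite _)

namespace KStruct

variable {M : KStruct} [Fintype M.W]

lemma IsModel.ncard_up_lt (hM : M.IsModel) {u w : M.W} (h : M.R u w) (hne : u ≠ w) :
    {x | M.R w x}.ncard < {x | M.R u x}.ncard :=
  ncard_lt_of_rel hM.1 hM.2.1 hM.2.2.1 h hne

lemma IsModel.ncard_down_lt (hM : M.IsModel) {u w : M.W} (h : M.R u w) (hne : u ≠ w) :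
    {x | M.R x u}.ncard < {x | M.R x w}.ncard :=
  ncard_lt_of_rel (R := fun a b => M.R b a) hM.1 (fun _ _ _ h h' => hM.2.1 _ _ _ h' h)
    (fun _ _ h h' => hM.2.2.1 _ _ h' h) h hne.symm

lemma mem_immSuccList {w u : M.W} : u ∈ immSuccList M w ↔ ImmSucc M w u := by
  simp [immSuccList]

variable (M) in
noncomputable def unravelTree (n : ℕ) (hM : M.IsModel) (w : M.W) : CTree n :=
  .node (fun i => M.V w i) ((immSuccList M w).attach.map fun u => unravelTree n hM u.1)
termination_by {v | M.R w v}.ncard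
decreasing_by
  obtain ⟨hwu, hne, -⟩ := mem_immSuccList.1 u.2
  exact hM.ncard_up_lt hwu hne

lemma unravelTree_eq (n : ℕ) (hM : M.IsModel) (w : M.W) :
    M.unravelTree n hM w =
      .node (fun i => M.V w i) ((immSuccList M w).map (M.unravelTree n hM)) := by
  rw [unravelTree, List.attach_map_val (f := M.unravelTree n hM)]

variable (M) in
noncomputable def follow : M.W → List ℕ → Option M.W
  | w, [] => some w
  | w, i :: l => (immSuccList M w)[i]?.bind (follow · l)

lemma subt_unravelTree (n : ℕ) (hM : M.IsModel) (l : List ℕ) (w : M.W) :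
    CTree.subt l (M.unravelTree n hM w) = (M.follow w l).map (M.unravelTree n hM) := by
  induction l generalizing w with
  | nil => rfl
  | cons i l ih =>
    rw [unravelTree_eq, CTree.subt_node_cons, List.getElem?_map]
    cases h : (immSuccList M w)[i]? <;> simp [follow, ih, h]

lemma follow_append (l m : List ℕ) (w : M.W) :
    M.follow w (l ++ m) = (M.follow w l).bind (M.follow · m) := by
  induction l generalizing w with
  | nil => rfl
  | cons i l ih => simp [follow, ih, Option.bind_assoc]

lemma IsModel.rel_of_follow (hM : M.IsModel) {l : List ℕ} {w v : M.W}
    (h : M.follow w l = some v) : M.R w v := by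
  induction l generalizing w with
  | nil => cases h; exact hM.1 _
  | cons i l ih =>
    obtain ⟨u, hu, hv⟩ := Option.bind_eq_some_iff.1 h
    exact hM.2.1 _ _ _ (mem_immSuccList.1 (List.mem_of_getElem? hu)).1 (ih hv)

lemma IsModel.persistent_unravelTree (hM : M.IsModel) (n : ℕ) (w : M.W) :
    (M.unravelTree n hM w).Persistent := by
  intro l m a b ha hb
  rw [subt_unravelTree, Option.map_eq_some_iff] at ha
  obtain ⟨u, -, rfl⟩ := ha
  rw [subt_unravelTree, Option.map_eq_some_iff] at hb
  obtain ⟨v, huv, rfl⟩ := hb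
  rw [unravelTree_eq, unravelTree_eq]
  exact fun i => Bool.le_iff_imp.2 (hM.2.2.2 u v i (hM.rel_of_follow huv))

lemma IsNModel.toModel_V_unravelTree {n : ℕ} (hM : M.IsNModel n) {r v : M.W}
    {w : (M.unravelTree n hM.1 r).toModel.W} (h : M.follow r w.1 = some v) (p : ℕ) :
    (M.unravelTree n hM.1 r).toModel.V w p = M.V v p := by
  rw [CTree.toModel_V_of_subt (by rw [subt_unravelTree, h]; rfl), unravelTree_eq]
  split_ifs with hp
  · rfl
  · exact (hM.2 v p (not_lt.1 hp)).symm

lemma IsNModel.pointedMono_unravelTree_model {n : ℕ} (hM : M.IsNModel n) (r : M.W) :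
    PointedMono (M.unravelTree n hM.1 r).toModel (M.unravelTree n hM.1 r).root M r := by
  have hpos (w : (M.unravelTree n hM.1 r).toModel.W) : (M.follow r w.1).isSome := by
    simpa [CTree.toModel, subt_unravelTree] using w.2
  obtain ⟨f, hf⟩ :
      ∃ f : (M.unravelTree n hM.1 r).toModel.W → M.W, ∀ w, M.follow r w.1 = some (f w) :=
    ⟨fun w => (M.follow r w.1).get (hpos w), fun w => (Option.some_get _).symm⟩
  refine ⟨f, ⟨fun v w ⟨m, hm⟩ => hM.1.rel_of_follow (l := m) ?_,
    fun w p => (hM.toModel_V_unravelTree (hf w) p).symm⟩, Option.some_injective _ (hf _).symm⟩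
  have := hf w
  rwa [← hm, follow_append, hf v] at this

variable {r : M.W}

/-- The strict predecessors of `w` form a finite chain, whose greatest element is the one with the
most predecessors. -/
lemma exists_parent (hM : M.IsModel) (htree : IsTree M r) {w : M.W} (hw : w ≠ r) :
    ∃ m, ImmSucc M m w ∧ ∀ v, M.R v w → v ≠ w → M.R v m := by
  obtain ⟨m, ⟨hmw, hne⟩, hmax⟩ := Set.exists_max_image {v | M.R v w ∧ v ≠ w}
    (fun v => {x | M.R x v}.ncard) (Set.toFinite _) ⟨r, htree.1 w, Ne.symm hw⟩
  have hgreatest (v) (hvw : M.R v w) (hv : v ≠ w) : M.R v m := by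
    rcases eq_or_ne v m with rfl | hvm
    · exact hM.1 v
    refine (htree.2.2 w v m hvw hmw).resolve_right fun hmv => (hmax v ⟨hvw, hv⟩).not_gt ?_
    exact hM.ncard_down_lt hmv hvm.symm
  refine ⟨m, ⟨hmw, hne, fun v hmv hvw => ?_⟩, hgreatest⟩
  rcases eq_or_ne v w with rfl | hv
  · exact .inr rfl
  · exact .inl (hM.2.2.1 _ _ (hgreatest v hvw hv) hmv)

noncomputable def parent (hM : M.IsModel) (htree : IsTree M r) {w : M.W} (hw : w ≠ r) : M.W :=
  (exists_parent hM htree hw).choose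

lemma parent_spec (hM : M.IsModel) (htree : IsTree M r) {w : M.W} (hw : w ≠ r) :
    ImmSucc M (parent hM htree hw) w ∧ ∀ v, M.R v w → v ≠ w → M.R v (parent hM htree hw) :=
  (exists_parent hM htree hw).choose_spec

open Classical in
noncomputable def pathTo (hM : M.IsModel) (htree : IsTree M r) (w : M.W) : List ℕ :=
  if hw : w = r then []
  else pathTo hM htree (parent hM htree hw) ++ [(immSuccList M (parent hM htree hw)).idxOf w]
termination_by {x | M.R x w}.ncard
decreasing_by
  obtain ⟨h, hne, -⟩ := (parent_spec hM htree hw).1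
  exact hM.ncard_down_lt h hne

section

variable (hM : M.IsModel) (htree : IsTree M r)

lemma pathTo_root : pathTo hM htree r = [] := by
  rw [pathTo, dif_pos rfl]

open Classical in
lemma pathTo_of_ne {w : M.W} (hw : w ≠ r) :
    pathTo hM htree w = pathTo hM htree (parent hM htree hw) ++
      [(immSuccList M (parent hM htree hw)).idxOf w] := by
  rw [pathTo, dif_neg hw]

lemma follow_pathTo (w : M.W) : M.follow r (pathTo hM htree w) = some w := by
  induction w using pathTo.induct hM htree with
  | case1 => rw [pathTo_root]; rfl
  | case2 w hw ih =>
    classical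
    have hmem := mem_immSuccList.2 (parent_spec hM htree hw).1
    rw [pathTo_of_ne hM htree hw, follow_append, ih]
    simp [follow, List.getElem?_eq_getElem (List.idxOf_lt_length_iff.2 hmem),
      List.getElem_idxOf]

lemma pathTo_prefix {v w : M.W} (h : M.R v w) : pathTo hM htree v <+: pathTo hM htree w := by
  induction w using pathTo.induct hM htree generalizing v with
  | case1 =>
    obtain rfl := hM.2.2.1 _ _ h (htree.1 v)
    exact List.prefix_refl _
  | case2 w hw ih =>
    rcases eq_or_ne v w with rfl | hvw
    · exact List.prefix_refl _
    rw [pathTo_of_ne hM htree hw]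
    exact (ih ((parent_spec hM htree hw).2 v h hvw)).trans (List.prefix_append _ _)

end

lemma IsNModel.pointedMono_model_unravelTree {n : ℕ} (hM : M.IsNModel n) (htree : IsTree M r) :
    PointedMono M r (M.unravelTree n hM.1 r).toModel (M.unravelTree n hM.1 r).root := by
  have hpos (w : M.W) : (CTree.subt (pathTo hM.1 htree w) (M.unravelTree n hM.1 r)).isSome := by
    rw [subt_unravelTree, follow_pathTo]; rfl
  exact ⟨fun w => ⟨pathTo hM.1 htree w, hpos w⟩,
    ⟨fun _ _ h => pathTo_prefix hM.1 htree h,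
      fun w p => hM.toModel_V_unravelTree (follow_pathTo hM.1 htree w) p⟩,
    Subtype.ext (pathTo_root hM.1 htree)⟩

end KStruct

/-- every finite tree-like n-model is `≡`-equivalent to a unique node of
`𝒯(n)`, and consequently satisfies the same MR-formulas at the root. -/
theorem tree_equiv_unique_univ_node (n : ℕ) (M : KStruct) [Fintype M.W]
    (hM : M.IsNModel n) (r : M.W) (htree : IsTree M r) :
    ∃ t : CTree n, UMem t ∧ MEquiv M t.toModel ∧
      (∀ s : CTree n, UMem s → MEquiv M s.toModel → s = t) ∧
      (∀ φ : Formula, MR φ → (M.sat r φ ↔ t.toModel.sat t.root φ)) := by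
  set t := (M.unravelTree n hM.1 r).normalize
  have ht : UMem t := (hM.1.persistent_unravelTree n r).umem_normalize
  have hto : PointedMono M r t.toModel t.root :=
    (hM.pointedMono_model_unravelTree htree).trans (CTree.rootMap_normalize _)
  have hfrom : PointedMono t.toModel t.root M r :=
    (CTree.rootMap_normalize_self _).trans (hM.pointedMono_unravelTree_model r)
  have ⟨f, hf, _⟩ := hto
  have ⟨g, hg, _⟩ := hfrom
  refine ⟨t, ht, ⟨⟨g, hg⟩, ⟨f, hf⟩⟩, fun s hs ⟨⟨f', hf'⟩, ⟨g', hg'⟩⟩ => ?_,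
    fun φ hφ => hφ.sat_iff_of_pointedMono hM.1 ht.persistent.toModel_isModel hto hfrom⟩
  exact hs.antisymm ht ⟨g' ∘ g, hg.comp hg'⟩ ⟨f ∘ f', hf'.comp hf⟩
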